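/- Let k ≥ 3 and t ≥ 3 be integers and let λ be a real number with λ^{(t−1)} < λ < μ^{(t−1)}, where λ^{(t−1)} is the largest zero of G_{t−1} and μ^{(t−1)} the largest zero of F_{t−1}. Then there exist real numbers c₁ with 0 < c₁ < 1 and c₂ > 0 (namely c₁ = −F_{t−1}(λ)/G_{t−2}(λ) and c₂ = −F_t(λ)/G_{t−1}(λ)) such that λ is the second largest eigenvalue of both T(k,t,c₁) and T(k,t+1,c₂), and moreover M(k,t,c₁) > M(k,t+1,c₂). -/

import Mathlib

open Polynomial

/-- The adjacency matrix of a simple graph over `ℝ` is Hermitian. -/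
theorem adjMatrix_isHermitian {V : Type*} [Fintype V] [DecidableEq V]
    (G : SimpleGraph V) [DecidableRel G.Adj] : (G.adjMatrix ℝ).IsHermitian := by
  rw [Matrix.IsHermitian, Matrix.conjTranspose_eq_transpose_of_trivial]
  exact G.isSymm_adjMatrix

/-- The multiset of adjacency eigenvalues (with multiplicity) of a finite simple graph. -/
noncomputable def eigMultiset {V : Type*} [Fintype V] [DecidableEq V]
    (G : SimpleGraph V) [DecidableRel G.Adj] : Multiset ℝ :=
  Multiset.map (adjMatrix_isHermitian G).eigenvalues Finset.univ.val

/-- The second largest adjacency eigenvalue (with multiplicity) of a finite simple graph: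
the second-to-last entry of the nondecreasing sorted list of eigenvalues. -/
noncomputable def secondEigenvalue {V : Type*} [Fintype V] [DecidableEq V]
    (G : SimpleGraph V) [DecidableRel G.Adj] : ℝ :=
  ((eigMultiset G).sort (· ≤ ·)).getD (((eigMultiset G).sort (· ≤ ·)).length - 2) 0

/-- The largest adjacency eigenvalue (spectral radius) of a finite simple graph. -/
noncomputable def largestEigenvalue {V : Type*} [Fintype V] [DecidableEq V]
    (G : SimpleGraph V) [DecidableRel G.Adj] : ℝ :=
  ((eigMultiset G).sort (· ≤ ·)).getD (((eigMultiset G).sort (· ≤ ·)).length - 1) 0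

/-- The orthogonal polynomials `F_i^{(k)}`. -/
noncomputable def Fpoly (k : ℕ) : ℕ → Polynomial ℝ
  | 0 => 1
  | 1 => X
  | 2 => X ^ 2 - C (k : ℝ)
  | n + 3 => X * Fpoly k (n + 2) - C ((k : ℝ) - 1) * Fpoly k (n + 1)

/-- `G_i = Σ_{j=0}^i F_j`. -/
noncomputable def Gpoly (k : ℕ) (i : ℕ) : Polynomial ℝ :=
  ∑ j ∈ Finset.range (i + 1), Fpoly k j

/-- The tridiagonal matrix `T(k,t,c)`: superdiagonal `(k, k-1, …, k-1)`,
subdiagonal `(1, …, 1, c)`, diagonal chosen so that every row sums to `k`. -/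
noncomputable def Tmat (k t : ℕ) (c : ℝ) : Matrix (Fin t) (Fin t) ℝ :=
  Matrix.of fun i j =>
    if (j : ℕ) = (i : ℕ) + 1 then (if (i : ℕ) = 0 then (k : ℝ) else (k : ℝ) - 1)
    else if (i : ℕ) = (j : ℕ) + 1 then (if (i : ℕ) = t - 1 then c else 1)
    else if i = j then
      (k : ℝ) - (if (i : ℕ) + 1 < t then (if (i : ℕ) = 0 then (k : ℝ) else (k : ℝ) - 1) else 0)
        - (if 0 < (i : ℕ) then (if (i : ℕ) = t - 1 then c else 1) else 0)
    else 0

/-- `M(k,t,c) = 1 + Σ_{i=0}^{t-3} k (k-1)^i + k (k-1)^{t-2} / c`. -/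
noncomputable def Mbound (k t : ℕ) (c : ℝ) : ℝ :=
  1 + (∑ i ∈ Finset.range (t - 2), (k : ℝ) * ((k : ℝ) - 1) ^ i)
    + (k : ℝ) * ((k : ℝ) - 1) ^ (t - 2) / c


open Filter Topology

/-!
Write `f = F_{t-1}` and `g = G_{t-1}`. The recurrence gives `F_{n+2} = (k-1) F_{n+1} + (X-k) G_{n+1}`,
so `F_n, G_n > 0` on `[k, ∞)`, and the Wronskian `W(F_{m+1}, F_{m+2})` is positive everywhere since
`W(F_{m+2}, F_{m+3}) = F_{m+2}^2 + (k-1) W(F_{m+1}, F_{m+2})`. At a zero `r ≥ λ^{(t-1)}` of `f` the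
identity gives `(k-1) F_{t-2}(r) = (k-r) g(r) ≥ 0`, so `W > 0` forces `f'(r) > 0`: every zero of `f`
beyond `λ^{(t-1)}` is an upward crossing, hence `f < 0` on `[λ^{(t-1)}, μ^{(t-1)})`. The identity also
gives `W(F_{t-1}, F_t) = f g - (X-k) W(g, f)`, so `W(g, f) > 0` wherever `f < 0 < g` and `x < k`, which
makes `f / g` increasing on `[λ, μ^{(t-1)}]`. Altogether `f(λ) g(x) < f(x) g(λ)` for every `x > λ`, and this is exactly what
makes `λ` the largest zero of `c₁ G_{t-2} + F_{t-1}` and of `c₂ G_{t-1} + F_t`. Finally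
`M(k,t+1,c₂) < M(k,t,c₁)` reduces to `c₁ (c₂ + k - 1) < c₂`, i.e. to `(k - λ) g(λ) > 0`.
-/

section RealPolynomial

variable {p q : ℝ[X]}

lemma eval_pos_of_forall_isRoot_le {a c y : ℝ} (hroots : ∀ x, p.IsRoot x → x ≤ a)
    (hpos : ∀ x, c ≤ x → 0 < p.eval x) (hy : a < y) : 0 < p.eval y := by
  by_contra! hpy
  obtain ⟨r, hr, hr0⟩ := isPreconnected_Ioi.intermediate_value hy (hy.trans_le (le_max_left y c))
    p.continuousOn ⟨hpy, (hpos _ (le_max_right y c)).le⟩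
  exact (hroots r hr0).not_gt hr

lemma eventually_slope_pos_of_derivative_pos {r : ℝ} (hd : 0 < p.derivative.eval r) :
    ∀ᶠ y in 𝓝[≠] r, 0 < slope (fun x => p.eval x) r y :=
  (hasDerivAt_iff_tendsto_slope.1 (p.hasDerivAt r)).eventually (lt_mem_nhds hd)

lemma eventually_eval_neg_of_derivative_pos {r : ℝ} (hr : p.IsRoot r)
    (hd : 0 < p.derivative.eval r) : ∀ᶠ y in 𝓝[<] r, p.eval y < 0 := by
  filter_upwards [(eventually_slope_pos_of_derivative_pos hd).filter_mono (nhdsLT_le_nhdsNE r),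
    self_mem_nhdsWithin] with y hy hyr
  rw [slope_def_field, hr.eq_zero, sub_zero] at hy
  exact ((div_pos_iff.1 hy).resolve_left fun h => (sub_neg.2 hyr).not_gt h.2).1

lemma eventually_eval_pos_of_derivative_pos {r : ℝ} (hr : p.IsRoot r)
    (hd : 0 < p.derivative.eval r) : ∀ᶠ y in 𝓝[>] r, 0 < p.eval y := by
  filter_upwards [(eventually_slope_pos_of_derivative_pos hd).filter_mono (nhdsGT_le_nhdsNE r),
    self_mem_nhdsWithin] with y hy hry
  rw [slope_def_field, hr.eq_zero, sub_zero] at hy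
  exact (div_pos_iff_of_pos_right (sub_pos.2 hry)).1 hy

lemma eval_neg_of_isRoot_of_derivative_pos {a b x : ℝ} (hb : p.IsRoot b)
    (hd : ∀ r ∈ Set.Icc a b, p.IsRoot r → 0 < p.derivative.eval r) (hx : x ∈ Set.Ico a b) :
    p.eval x < 0 := by
  by_contra! hpx
  obtain ⟨y, hpy, hxy, hyb⟩ : ∃ y, p.eval y < 0 ∧ y ∈ Set.Ioo x b :=
    ((eventually_eval_neg_of_derivative_pos hb (hd b ⟨hx.1.trans hx.2.le, le_rfl⟩ hb)).and
      (Ioo_mem_nhdsLT hx.2)).exists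
  -- `p` is positive just right of its largest zero in `[x, y]`, yet `p y < 0`
  set Z := Set.Icc x y ∩ {z | p.IsRoot z}
  have hZ : IsCompact Z :=
    isCompact_Icc.inter_right (isClosed_eq p.continuous continuous_const)
  have hZne : Z.Nonempty := by
    obtain ⟨z, hz, hz0⟩ := intermediate_value_Icc' hxy.le p.continuousOn ⟨hpy.le, hpx⟩
    exact ⟨z, hz, hz0⟩
  obtain ⟨⟨hxr, hry⟩, hr⟩ := hZ.sSup_mem hZne
  have hry' : sSup Z < y := hry.lt_of_ne fun h => hpy.ne (h ▸ hr)
  obtain ⟨z, hpz, hrz, hzy⟩ : ∃ z, 0 < p.eval z ∧ z ∈ Set.Ioo (sSup Z) y :=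
    ((eventually_eval_pos_of_derivative_pos hr
      (hd _ ⟨hx.1.trans hxr, hry.trans hyb.le⟩ hr)).and (Ioo_mem_nhdsGT hry')).exists
  obtain ⟨s, hs, hs0⟩ := intermediate_value_Icc' hzy.le p.continuousOn ⟨hpy.le, hpz.le⟩
  have hsZ : s ∈ Z := ⟨⟨(hxr.trans hrz.le).trans hs.1, hs.2⟩, hs0⟩
  exact (hrz.trans_le hs.1).not_ge (le_csSup hZ.bddAbove hsZ)

lemma strictMonoOn_eval_div {a b : ℝ} (hq : ∀ x ∈ Set.Icc a b, 0 < q.eval x)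
    (hw : ∀ x ∈ Set.Ioo a b, 0 < (wronskian q p).eval x) :
    StrictMonoOn (fun x => p.eval x / q.eval x) (Set.Icc a b) := by
  apply strictMonoOn_of_deriv_pos (convex_Icc a b)
  · exact p.continuousOn.div q.continuousOn fun x hx => (hq x hx).ne'
  · intro x hx
    rw [interior_Icc] at hx
    have hqx := hq x (Set.Ioo_subset_Icc_self hx)
    have hwx := hw x hx
    simp only [wronskian, eval_sub, eval_mul] at hwx
    have hD : HasDerivAt (fun y => p.eval y / q.eval y) _ x :=
      (p.hasDerivAt x).div (q.hasDerivAt x) hqx.ne'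
    rw [hD.deriv]
    exact div_pos (by linarith) (by positivity)

lemma isGreatest_isRoot_C_neg_div_mul_add {A B : ℝ[X]} {lam : ℝ} (hB : 0 < B.eval lam)
    (h : ∀ x, lam < x → A.eval lam * B.eval x < A.eval x * B.eval lam) :
    IsGreatest {x | (C (-A.eval lam / B.eval lam) * B + A).IsRoot x} lam := by
  have key : ∀ x, (C (-A.eval lam / B.eval lam) * B + A).eval x * B.eval lam
      = A.eval x * B.eval lam - A.eval lam * B.eval x := by
    intro x
    simp only [eval_add, eval_mul, eval_C]
    field_simp
    ring
  refine ⟨(mul_eq_zero.1 ((key lam).trans (sub_self _))).resolve_right hB.ne', fun x hx => ?_⟩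
  by_contra! hlt
  have := key x
  rw [IsRoot.eq_zero hx, zero_mul] at this
  linarith [h x hlt]

end RealPolynomial

section Recurrences

variable {k : ℕ}

lemma Gpoly_succ (n : ℕ) : Gpoly k (n + 1) = Gpoly k n + Fpoly k (n + 1) :=
  Finset.sum_range_succ _ _

lemma Fpoly_add_two (n : ℕ) :
    Fpoly k (n + 2) = C ((k : ℝ) - 1) * Fpoly k (n + 1) + (X - C (k : ℝ)) * Gpoly k (n + 1) := by
  induction n with
  | zero =>
    simp only [Fpoly, Gpoly, Finset.sum_range_succ, Finset.sum_range_zero, map_sub, map_one]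
    ring
  | succ n ih =>
    rw [show Fpoly k (n + 3) = X * Fpoly k (n + 2) - C ((k : ℝ) - 1) * Fpoly k (n + 1) from rfl,
      Gpoly_succ (n + 1)]
    simp only [map_sub, map_one] at ih ⊢
    linear_combination ih

lemma eval_Gpoly_succ (n : ℕ) (x : ℝ) :
    (Gpoly k (n + 1)).eval x = (Gpoly k n).eval x + (Fpoly k (n + 1)).eval x := by
  simp [Gpoly_succ]

lemma eval_Fpoly_add_two (n : ℕ) (x : ℝ) :
    (Fpoly k (n + 2)).eval x
      = ((k : ℝ) - 1) * (Fpoly k (n + 1)).eval x + (x - k) * (Gpoly k (n + 1)).eval x := by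
  rw [Fpoly_add_two]
  simp

lemma C_sub_one_mul_Gpoly_add_Gpoly_succ (c : ℝ) (n : ℕ) :
    C (c - 1) * Gpoly k n + Gpoly k (n + 1) = C c * Gpoly k n + Fpoly k (n + 1) := by
  rw [Gpoly_succ, C_sub, C_1]
  ring

lemma eval_Fpoly_pos_and_eval_Gpoly_pos (hk : 2 ≤ k) {x : ℝ} (hx : k ≤ x) (n : ℕ) :
    0 < (Fpoly k (n + 1)).eval x ∧ 0 < (Gpoly k (n + 1)).eval x := by
  have hk' : (2 : ℝ) ≤ k := by exact_mod_cast hk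
  induction n with
  | zero =>
    simp only [Gpoly, Fpoly, Finset.sum_range_succ, Finset.sum_range_zero, zero_add, eval_add,
      eval_one, eval_X]
    constructor <;> linarith
  | succ n ih =>
    have hF : 0 < (Fpoly k (n + 2)).eval x := by
      rw [eval_Fpoly_add_two]
      nlinarith [ih.1, ih.2]
    exact ⟨hF, by rw [eval_Gpoly_succ]; linarith [ih.2]⟩

lemma lt_of_isRoot_Fpoly (hk : 2 ≤ k) {n : ℕ} {r : ℝ} (hr : (Fpoly k (n + 1)).IsRoot r) :
    r < k := by
  by_contra! h
  exact (eval_Fpoly_pos_and_eval_Gpoly_pos hk h n).1.ne' hr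

lemma wronskian_Fpoly_one_two : wronskian (Fpoly k 1) (Fpoly k 2) = X ^ 2 + C (k : ℝ) := by
  simp only [wronskian, Fpoly, derivative_sub, derivative_X_pow, derivative_C, derivative_X]
  rw [C_eq_natCast]
  push_cast
  ring

lemma wronskian_Fpoly_succ (m : ℕ) :
    wronskian (Fpoly k (m + 2)) (Fpoly k (m + 3))
      = Fpoly k (m + 2) ^ 2 + C ((k : ℝ) - 1) * wronskian (Fpoly k (m + 1)) (Fpoly k (m + 2)) := by
  rw [show Fpoly k (m + 3) = X * Fpoly k (m + 2) - C ((k : ℝ) - 1) * Fpoly k (m + 1) from rfl]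
  simp only [wronskian, derivative_sub, derivative_mul, derivative_X, derivative_C]
  ring

lemma eval_wronskian_Fpoly_pos (hk : 2 ≤ k) (m : ℕ) (x : ℝ) :
    0 < (wronskian (Fpoly k (m + 1)) (Fpoly k (m + 2))).eval x := by
  have hk' : (2 : ℝ) ≤ k := by exact_mod_cast hk
  induction m with
  | zero =>
    rw [wronskian_Fpoly_one_two]
    simp only [eval_add, eval_pow, eval_X, eval_C]
    positivity
  | succ m ih =>
    rw [wronskian_Fpoly_succ]
    simp only [eval_add, eval_mul, eval_pow, eval_C]
    nlinarith [sq_nonneg ((Fpoly k (m + 2)).eval x)]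

lemma wronskian_Fpoly_eq_mul_sub_wronskian_Gpoly (m : ℕ) :
    wronskian (Fpoly k (m + 1)) (Fpoly k (m + 2))
      = Fpoly k (m + 1) * Gpoly k (m + 1)
        - (X - C (k : ℝ)) * wronskian (Gpoly k (m + 1)) (Fpoly k (m + 1)) := by
  rw [Fpoly_add_two m]
  simp only [wronskian, derivative_add, derivative_mul, derivative_sub, derivative_X, derivative_C]
  ring

lemma eval_derivative_Fpoly_pos_of_isRoot (hk : 2 ≤ k) {m : ℕ} {r : ℝ}
    (hr : (Fpoly k (m + 2)).IsRoot r) (hG : 0 ≤ (Gpoly k (m + 2)).eval r) :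
    0 < (Fpoly k (m + 2)).derivative.eval r := by
  have hW := eval_wronskian_Fpoly_pos hk m r
  have hF := eval_Fpoly_add_two (k := k) m r
  have hG' := eval_Gpoly_succ (k := k) (m + 1) r
  have hrk := lt_of_isRoot_Fpoly hk hr
  have hk' : (2 : ℝ) ≤ k := by exact_mod_cast hk
  simp only [wronskian, eval_sub, eval_mul] at hW
  rw [hr.eq_zero, mul_zero, sub_zero] at hW
  rw [hr.eq_zero] at hF hG'
  -- at a root, `(k - 1) F_{m+1}(r) = (k - r) G_{m+2}(r)`
  have hF1 : 0 ≤ (Fpoly k (m + 1)).eval r := by nlinarith [mul_nonneg (sub_nonneg.2 hrk.le) hG]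
  exact pos_of_mul_pos_right hW hF1

lemma eval_wronskian_Gpoly_Fpoly_pos (hk : 2 ≤ k) (m : ℕ) {x : ℝ} (hxk : x < k)
    (hF : (Fpoly k (m + 1)).eval x < 0) (hG : 0 < (Gpoly k (m + 1)).eval x) :
    0 < (wronskian (Gpoly k (m + 1)) (Fpoly k (m + 1))).eval x := by
  have hW := eval_wronskian_Fpoly_pos hk m x
  rw [wronskian_Fpoly_eq_mul_sub_wronskian_Gpoly] at hW
  simp only [eval_sub, eval_mul, eval_X, eval_C] at hW
  nlinarith [mul_neg_of_neg_of_pos hF hG]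

end Recurrences

section Signs

variable {k m : ℕ} {lamt1 mut1 : ℝ}

lemma eval_Fpoly_pos_of_gt (hk : 2 ≤ k) {n : ℕ} {a y : ℝ}
    (hroots : ∀ x, (Fpoly k (n + 1)).IsRoot x → x ≤ a) (hy : a < y) :
    0 < (Fpoly k (n + 1)).eval y :=
  eval_pos_of_forall_isRoot_le hroots (fun _ hx => (eval_Fpoly_pos_and_eval_Gpoly_pos hk hx n).1) hy

lemma eval_Gpoly_pos_of_gt (hk : 2 ≤ k) {n : ℕ} {a y : ℝ}
    (hroots : ∀ x, (Gpoly k (n + 1)).IsRoot x → x ≤ a) (hy : a < y) :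
    0 < (Gpoly k (n + 1)).eval y :=
  eval_pos_of_forall_isRoot_le hroots (fun _ hx => (eval_Fpoly_pos_and_eval_Gpoly_pos hk hx n).2) hy

lemma eval_Fpoly_neg (hk : 2 ≤ k) (hlamt1 : (Gpoly k (m + 2)).IsRoot lamt1)
    (hlamt1max : ∀ x, (Gpoly k (m + 2)).IsRoot x → x ≤ lamt1)
    (hmut1 : (Fpoly k (m + 2)).IsRoot mut1) {x : ℝ} (hx : x ∈ Set.Ico lamt1 mut1) :
    (Fpoly k (m + 2)).eval x < 0 := by
  refine eval_neg_of_isRoot_of_derivative_pos hmut1 (fun r hr hroot => ?_) hx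
  refine eval_derivative_Fpoly_pos_of_isRoot hk hroot ?_
  rcases hr.1.eq_or_lt with rfl | hlt
  · exact hlamt1.eq_zero.ge
  · exact (eval_Gpoly_pos_of_gt hk hlamt1max hlt).le

lemma eval_Fpoly_mul_eval_Gpoly_lt (hk : 2 ≤ k) (hlamt1 : (Gpoly k (m + 2)).IsRoot lamt1)
    (hlamt1max : ∀ x, (Gpoly k (m + 2)).IsRoot x → x ≤ lamt1)
    (hmut1 : (Fpoly k (m + 2)).IsRoot mut1)
    (hmut1max : ∀ x, (Fpoly k (m + 2)).IsRoot x → x ≤ mut1) {lam x : ℝ}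
    (h1 : lamt1 < lam) (h2 : lam < mut1) (hx : lam < x) :
    (Fpoly k (m + 2)).eval lam * (Gpoly k (m + 2)).eval x
      < (Fpoly k (m + 2)).eval x * (Gpoly k (m + 2)).eval lam := by
  have hG : ∀ y, lamt1 < y → 0 < (Gpoly k (m + 2)).eval y := fun y =>
    eval_Gpoly_pos_of_gt hk hlamt1max
  have hF : ∀ y ∈ Set.Ico lamt1 mut1, (Fpoly k (m + 2)).eval y < 0 := fun y =>
    eval_Fpoly_neg hk hlamt1 hlamt1max hmut1
  rcases lt_or_ge x mut1 with hxm | hxm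
  · have hmono : StrictMonoOn (fun y => (Fpoly k (m + 2)).eval y / (Gpoly k (m + 2)).eval y)
        (Set.Icc lam mut1) :=
      strictMonoOn_eval_div (fun y hy => hG y (h1.trans_le hy.1)) fun y hy =>
        eval_wronskian_Gpoly_Fpoly_pos hk (m + 1) (hy.2.trans (lt_of_isRoot_Fpoly hk hmut1))
          (hF y ⟨(h1.trans hy.1).le, hy.2⟩) (hG y (h1.trans hy.1))
    have := hmono ⟨le_rfl, h2.le⟩ ⟨hx.le, hxm.le⟩ hx
    rwa [div_lt_div_iff₀ (hG lam h1) (hG x (h1.trans hx))] at this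
  · have hFx : 0 ≤ (Fpoly k (m + 2)).eval x := by
      rcases hxm.eq_or_lt with rfl | hlt
      · exact hmut1.eq_zero.ge
      · exact (eval_Fpoly_pos_of_gt hk hmut1max hlt).le
    nlinarith [mul_neg_of_neg_of_pos (hF lam ⟨h1.le, h2⟩) (hG x (h1.trans hx)),
      mul_nonneg hFx (hG lam h1).le]

end Signs

lemma Mbound_succ_lt {k t : ℕ} (hk : 2 ≤ k) (ht : 2 ≤ t) {c₁ c₂ : ℝ} (hc₁ : 0 < c₁)
    (hc₂ : 0 < c₂) (h : c₁ * (c₂ + k - 1) < c₂) : Mbound k (t + 1) c₂ < Mbound k t c₁ := by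
  obtain ⟨s, rfl⟩ : ∃ s, t = s + 2 := ⟨t - 2, by omega⟩
  have hk' : (2 : ℝ) ≤ k := by exact_mod_cast hk
  have hP : 0 < (k : ℝ) * ((k : ℝ) - 1) ^ s := mul_pos (by positivity) (pow_pos (by linarith) s)
  have key : 1 + ((k : ℝ) - 1) / c₂ < 1 / c₁ := by
    rw [one_add_div hc₂.ne', div_lt_div_iff₀ hc₂ hc₁]
    linarith
  simp only [Mbound, show s + 2 + 1 - 2 = s + 1 from rfl, show s + 2 - 2 = s from rfl,
    Finset.sum_range_succ, pow_succ]
  calc _ = 1 + ∑ i ∈ Finset.range s, (k : ℝ) * ((k : ℝ) - 1) ^ i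
        + (k : ℝ) * ((k : ℝ) - 1) ^ s * (1 + ((k : ℝ) - 1) / c₂) := by ring
    _ < 1 + ∑ i ∈ Finset.range s, (k : ℝ) * ((k : ℝ) - 1) ^ i
        + (k : ℝ) * ((k : ℝ) - 1) ^ s * (1 / c₁) := by gcongr
    _ = _ := by ring

section Extremal

variable {k m : ℕ} {lam : ℝ}

lemma isGreatest_isRoot_C_mul_Gpoly_add_Fpoly
    (hcross : ∀ x, lam < x → (Fpoly k (m + 2)).eval lam * (Gpoly k (m + 2)).eval x
      < (Fpoly k (m + 2)).eval x * (Gpoly k (m + 2)).eval lam)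
    (hG : 0 < (Gpoly k (m + 1)).eval lam) :
    IsGreatest {x | (C (-(Fpoly k (m + 2)).eval lam / (Gpoly k (m + 1)).eval lam)
      * Gpoly k (m + 1) + Fpoly k (m + 2)).IsRoot x} lam :=
  isGreatest_isRoot_C_neg_div_mul_add hG fun x hx => by
    linear_combination hcross x hx - (Fpoly k (m + 2)).eval lam * eval_Gpoly_succ (m + 1) x
      + (Fpoly k (m + 2)).eval x * eval_Gpoly_succ (m + 1) lam

lemma isGreatest_isRoot_C_mul_Gpoly_add_Fpoly_succ (hk : 1 ≤ k)
    (hcross : ∀ x, lam < x → (Fpoly k (m + 2)).eval lam * (Gpoly k (m + 2)).eval x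
      < (Fpoly k (m + 2)).eval x * (Gpoly k (m + 2)).eval lam)
    (hG : ∀ x, lam ≤ x → 0 < (Gpoly k (m + 2)).eval x) :
    IsGreatest {x | (C (-(Fpoly k (m + 3)).eval lam / (Gpoly k (m + 2)).eval lam)
      * Gpoly k (m + 2) + Fpoly k (m + 3)).IsRoot x} lam := by
  have hk' : (1 : ℝ) ≤ k := by exact_mod_cast hk
  refine isGreatest_isRoot_C_neg_div_mul_add (hG lam le_rfl) fun x hx => ?_
  have h₁ := mul_le_mul_of_nonneg_left (hcross x hx).le (sub_nonneg.2 hk')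
  have h₂ := mul_pos (sub_pos.2 hx) (mul_pos (hG lam le_rfl) (hG x hx.le))
  rw [eval_Fpoly_add_two (m + 1) x, eval_Fpoly_add_two (m + 1) lam]
  linarith

end Extremal

theorem stmt9 (k t : ℕ) (hk : 3 ≤ k) (ht : 3 ≤ t) (lam lamt1 mut1 : ℝ)
    (hlamt1 : (Gpoly k (t - 1)).IsRoot lamt1)
    (hlamt1max : ∀ x : ℝ, (Gpoly k (t - 1)).IsRoot x → x ≤ lamt1)
    (hmut1 : (Fpoly k (t - 1)).IsRoot mut1)
    (hmut1max : ∀ x : ℝ, (Fpoly k (t - 1)).IsRoot x → x ≤ mut1)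
    (h1 : lamt1 < lam) (h2 : lam < mut1) :
    ∃ c₁ c₂ : ℝ,
      c₁ = -(Fpoly k (t - 1)).eval lam / (Gpoly k (t - 2)).eval lam ∧
      c₂ = -(Fpoly k t).eval lam / (Gpoly k (t - 1)).eval lam ∧
      0 < c₁ ∧ c₁ < 1 ∧ 0 < c₂ ∧
      ((C (c₁ - 1) * Gpoly k (t - 2) + Gpoly k (t - 1)).IsRoot lam ∧
        ∀ x : ℝ, (C (c₁ - 1) * Gpoly k (t - 2) + Gpoly k (t - 1)).IsRoot x → x ≤ lam) ∧
      ((C (c₂ - 1) * Gpoly k (t - 1) + Gpoly k t).IsRoot lam ∧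
        ∀ x : ℝ, (C (c₂ - 1) * Gpoly k (t - 1) + Gpoly k t).IsRoot x → x ≤ lam) ∧
      Mbound k (t + 1) c₂ < Mbound k t c₁ := by
  obtain ⟨m, rfl⟩ : ∃ m, t = m + 3 := ⟨t - 3, by omega⟩
  rw [show m + 3 - 1 = m + 2 from rfl] at hlamt1 hlamt1max hmut1 hmut1max ⊢
  rw [show m + 3 - 2 = m + 1 from rfl]
  have hk2 : 2 ≤ k := by omega
  have hcross := fun x (hx : lam < x) =>
    eval_Fpoly_mul_eval_Gpoly_lt hk2 hlamt1 hlamt1max hmut1 hmut1max h1 h2 hx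
  have hGpos : ∀ x, lam ≤ x → 0 < (Gpoly k (m + 2)).eval x := fun x hx =>
    eval_Gpoly_pos_of_gt hk2 hlamt1max (h1.trans_le hx)
  have hlamk : lam < k := h2.trans (lt_of_isRoot_Fpoly hk2 hmut1)
  set f := (Fpoly k (m + 2)).eval lam
  set g := (Gpoly k (m + 2)).eval lam
  set g₁ := (Gpoly k (m + 1)).eval lam
  set f₃ := (Fpoly k (m + 3)).eval lam
  have hf₃ : f₃ = (k - 1) * f + (lam - k) * g := eval_Fpoly_add_two (m + 1) lam
  have hg : g = g₁ + f := eval_Gpoly_succ (m + 1) lam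
  have hf_neg : f < 0 := eval_Fpoly_neg hk2 hlamt1 hlamt1max hmut1 ⟨h1.le, h2⟩
  have hg_pos : 0 < g := hGpos lam le_rfl
  have hg₁_pos : 0 < g₁ := by linarith
  have hf₃_neg : f₃ < 0 := by
    have hk' : (1 : ℝ) < k := by exact_mod_cast hk2
    linarith [mul_neg_of_pos_of_neg (sub_pos.2 hk') hf_neg,
      mul_neg_of_neg_of_pos (sub_neg.2 hlamk) hg_pos]
  have hc₁ : 0 < -f / g₁ := div_pos (neg_pos.2 hf_neg) hg₁_pos
  have hc₂ : 0 < -f₃ / g := div_pos (neg_pos.2 hf₃_neg) hg_pos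
  refine ⟨_, _, rfl, rfl, hc₁, (div_lt_one hg₁_pos).2 (by linarith), hc₂, ?_, ?_,
    Mbound_succ_lt hk2 (by omega) hc₁ hc₂ ?_⟩
  · rw [C_sub_one_mul_Gpoly_add_Gpoly_succ]
    exact isGreatest_isRoot_C_mul_Gpoly_add_Fpoly hcross hg₁_pos
  · rw [C_sub_one_mul_Gpoly_add_Gpoly_succ]
    exact isGreatest_isRoot_C_mul_Gpoly_add_Fpoly_succ (by omega) hcross hGpos
  · -- this is `(k - λ) g > 0` after clearing denominators
    rw [div_mul_eq_mul_div, div_lt_div_iff₀ hg₁_pos hg_pos, mul_assoc,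
      show (-f₃ / g + k - 1) * g = -f₃ + (k - 1) * g by field_simp; ring]
    nlinarith [mul_pos (sub_pos.2 hlamk) (mul_pos hg_pos hg_pos)]
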